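/- Let M be a d×d doubly stochastic Markov matrix (all entries nonnegative, all row sums and all column sums equal to 1). If M = exp(Q) for some d×d Markov generator Q, then Q is doubly stochastic as well, i.e., every column of Q also sums to 0. Hence a doubly stochastic Markov matrix is embeddable if and only if it can be embedded with a doubly stochastic generator. -/

import Mathlib

/-!
Write `exp Q - 1 = Q * exprel Q`, where `exprel z = (exp z - 1) / z = ∑ zⁿ / (n + 1)!`.
If `1ᵀ exp Q = 1ᵀ`, then `(1ᵀ Q) * exprel Q = 0`, so it suffices that `exprel Q` is invertible.
Since `exprel Q` commutes with `Q`, a kernel vector of `exprel Q` can be chosen to be an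
eigenvector of `Q`, for an eigenvalue `μ` with `exprel μ = 0`, i.e. `μ ≠ 0` and `exp μ = 1`,
so `μ ∈ 2πiℤ \ {0}`. By Gershgorin, every eigenvalue of a generator lies in a disc
`|μ - q| ≤ -q` with `q ≤ 0`, which meets the imaginary axis only at `0`.
-/

/-- A Markov matrix: nonnegative entries, each row sums to 1. -/
def IsMarkov {d : ℕ} (M : Matrix (Fin d) (Fin d) ℝ) : Prop :=
  (∀ i j, 0 ≤ M i j) ∧ ∀ i, ∑ j, M i j = 1

/-- A Markov generator (rate matrix): nonnegative off-diagonal entries,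
each row sums to 0. -/
def IsGenerator {d : ℕ} (Q : Matrix (Fin d) (Fin d) ℝ) : Prop :=
  (∀ i j, i ≠ j → 0 ≤ Q i j) ∧ ∀ i, ∑ j, Q i j = 0

open NormedSpace Module End
open scoped Nat

section Exprel

noncomputable def exprel (𝕂 : Type*) {𝔸 : Type*} [Field 𝕂] [Ring 𝔸] [Algebra 𝕂 𝔸]
    [TopologicalSpace 𝔸] (a : 𝔸) : 𝔸 :=
  ∑' n : ℕ, ((n + 1)! : 𝕂)⁻¹ • a ^ n

variable {𝕂 𝔸 : Type*} [RCLike 𝕂] [NormedRing 𝔸] [NormedAlgebra 𝕂 𝔸]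

theorem exprel_zero : exprel 𝕂 (0 : 𝔸) = 1 := by
  rw [exprel, tsum_eq_single 0 fun n hn => by simp [zero_pow hn]]
  simp

variable [CompleteSpace 𝔸]

theorem summable_exprel_series (a : 𝔸) :
    Summable fun n : ℕ => ((n + 1)! : 𝕂)⁻¹ • a ^ n := by
  refine (norm_expSeries_summable' (𝕂 := 𝕂) a).of_norm_bounded fun n => ?_
  rw [norm_smul, norm_smul]
  gcongr
  simp only [norm_inv, RCLike.norm_natCast]
  gcongr
  exact n.le_succ

theorem exp_sub_one_eq_tsum (a : 𝔸) :
    exp a - 1 = ∑' n : ℕ, ((n + 1)! : 𝕂)⁻¹ • a ^ (n + 1) := by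
  rw [congrFun (exp_eq_tsum 𝕂) a, (expSeries_summable' (𝕂 := 𝕂) a).tsum_eq_zero_add]
  simp

theorem mul_exprel (a : 𝔸) : a * exprel 𝕂 a = exp a - 1 := by
  rw [exp_sub_one_eq_tsum (𝕂 := 𝕂), exprel, ← (summable_exprel_series a).tsum_mul_left]
  congr 1; funext n
  rw [mul_smul_comm, ← pow_succ']

theorem exprel_mul (a : 𝔸) : exprel 𝕂 a * a = exp a - 1 := by
  rw [exp_sub_one_eq_tsum (𝕂 := 𝕂), exprel, ← (summable_exprel_series a).tsum_mul_right]
  congr 1; funext n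
  rw [smul_mul_assoc, ← pow_succ]

end Exprel

theorem Complex.exp_eq_one_of_exprel_eq_zero {μ : ℂ} (h : exprel ℂ μ = 0) :
    Complex.exp μ = 1 := by
  have := mul_exprel (𝕂 := ℂ) μ
  rw [h, mul_zero, ← Complex.exp_eq_exp_ℂ] at this
  exact sub_eq_zero.1 this.symm

theorem Module.End.exists_hasEigenvector_of_commute_of_ker_ne_bot {K V : Type*} [Field K]
    [IsAlgClosed K] [AddCommGroup V] [Module K V] [FiniteDimensional K V] {f g : End K V}
    (hfg : Commute f g) (hg : LinearMap.ker g ≠ ⊥) :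
    ∃ μ v, f.HasEigenvector μ v ∧ g v = 0 := by
  have hf : ∀ v ∈ LinearMap.ker g, f v ∈ LinearMap.ker g := fun v hv => by
    rw [LinearMap.mem_ker] at hv ⊢
    rw [← Module.End.mul_apply, ← hfg.eq, Module.End.mul_apply, hv, map_zero]
  have : Nontrivial (LinearMap.ker g) := Submodule.nontrivial_iff_ne_bot.2 hg
  obtain ⟨μ, hμ⟩ := exists_eigenvalue (f.restrict hf)
  obtain ⟨v, hv, hv0⟩ := hμ.exists_hasEigenvector
  refine ⟨μ, v, ⟨?_, ?_⟩, v.2⟩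
  · rw [mem_eigenspace_iff] at hv ⊢
    exact congrArg Subtype.val hv
  · exact fun h => hv0 (Subtype.ext h)

namespace Matrix

variable {𝕂 n : Type*} [RCLike 𝕂] [Fintype n] [DecidableEq n]

-- `exprel` and `exp` depend only on the topology, so any compatible algebra norm can be used.
theorem summable_exprel_series (A : Matrix n n 𝕂) :
    Summable fun k : ℕ => ((k + 1)! : 𝕂)⁻¹ • A ^ k :=
  open scoped Norms.Operator in _root_.summable_exprel_series A

theorem mul_exprel (A : Matrix n n 𝕂) : A * exprel 𝕂 A = NormedSpace.exp A - 1 :=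
  open scoped Norms.Operator in _root_.mul_exprel A

theorem exprel_mul (A : Matrix n n 𝕂) : exprel 𝕂 A * A = NormedSpace.exp A - 1 :=
  open scoped Norms.Operator in _root_.exprel_mul A

theorem exprel_mulVec_of_hasEigenvector {A : Matrix n n 𝕂} {μ : 𝕂} {v : n → 𝕂}
    (hv : HasEigenvector (toLin' A) μ v) : exprel 𝕂 A *ᵥ v = exprel 𝕂 μ • v := by
  let applyTo : Matrix n n 𝕂 →+ (n → 𝕂) := AddMonoidHom.mk' (· *ᵥ v) fun B C => add_mulVec B C v
  have hmap := (summable_exprel_series A).hasSum.map applyTo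
    (Continuous.matrix_mulVec continuous_id continuous_const)
  refine hmap.unique ?_
  convert (_root_.summable_exprel_series (𝕂 := 𝕂) μ).hasSum.smul_const v using 2 with k
  · simp [applyTo, ← toLin'_apply, toLin'_pow, hv.pow_apply, smul_smul]
  · rfl

theorem det_exprel_ne_zero {A : Matrix n n ℂ}
    (hA : ∀ μ, HasEigenvalue (toLin' A) μ → Complex.exp μ = 1 → μ = 0) :
    (exprel ℂ A).det ≠ 0 := by
  intro hdet
  have hker : LinearMap.ker (toLin' (exprel ℂ A)) ≠ ⊥ := by
    obtain ⟨v, hv0, hv⟩ := exists_mulVec_eq_zero_iff.2 hdet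
    exact fun h => hv0 (ker_toLin'_eq_bot_iff.1 h v hv)
  have hcomm : Commute (toLin' A) (toLin' (exprel ℂ A)) := by
    rw [Commute, SemiconjBy, mul_eq_comp, mul_eq_comp, ← toLin'_mul, ← toLin'_mul, mul_exprel,
      exprel_mul]
  obtain ⟨μ, v, hv, hv0⟩ := exists_hasEigenvector_of_commute_of_ker_ne_bot hcomm hker
  have hμ : exprel ℂ μ = 0 := by
    rw [toLin'_apply, exprel_mulVec_of_hasEigenvector hv] at hv0
    exact (smul_eq_zero.1 hv0).resolve_right hv.2
  have hμ0 : μ ≠ 0 := by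
    rintro rfl
    simp [exprel_zero] at hμ
  exact hμ0 (hA μ (hasEigenvalue_of_hasEigenvector hv) (Complex.exp_eq_one_of_exprel_eq_zero hμ))

theorem vecMul_eq_zero_of_vecMul_exp_eq {A : Matrix n n ℂ}
    (hA : ∀ μ, HasEigenvalue (toLin' A) μ → Complex.exp μ = 1 → μ = 0) {v : n → ℂ}
    (hv : v ᵥ* NormedSpace.exp A = v) : v ᵥ* A = 0 := by
  refine eq_zero_of_vecMul_eq_zero (det_exprel_ne_zero hA) ?_
  rw [vecMul_vecMul, mul_exprel, vecMul_sub, vecMul_one, hv, sub_self]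

end Matrix

open Matrix Finset

theorem Complex.eq_zero_of_re_eq_zero_of_norm_sub_ofReal_le {μ : ℂ} {q : ℝ} (hre : μ.re = 0)
    (h : ‖μ - q‖ ≤ -q) : μ = 0 := by
  have hsq : ‖μ - q‖ ^ 2 ≤ q ^ 2 := by nlinarith [norm_nonneg (μ - q)]
  rw [Complex.sq_norm, Complex.normSq_apply] at hsq
  simp only [sub_re, ofReal_re, hre, sub_im, ofReal_im, sub_zero] at hsq
  exact Complex.ext hre (by simpa using (by nlinarith : μ.im ^ 2 ≤ 0))

theorem Complex.re_eq_zero_of_exp_eq_one {μ : ℂ} (h : Complex.exp μ = 1) : μ.re = 0 := by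
  have := congrArg norm h
  rwa [Complex.norm_exp, norm_one, Real.exp_eq_one_iff] at this

namespace IsGenerator

variable {d : ℕ} {Q : Matrix (Fin d) (Fin d) ℝ}

theorem sum_erase_abs_eq_neg_diag (hQ : IsGenerator Q) (k : Fin d) :
    ∑ j ∈ univ.erase k, |Q k j| = -Q k k := by
  rw [sum_congr rfl fun j hj => abs_of_nonneg (hQ.1 k j (ne_of_mem_erase hj).symm),
    sum_erase_eq_sub (mem_univ k), hQ.2 k, zero_sub]

theorem eq_zero_of_hasEigenvalue_of_exp_eq_one (hQ : IsGenerator Q) {μ : ℂ}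
    (hμ : HasEigenvalue (toLin' (Q.map (↑))) μ) (hexp : Complex.exp μ = 1) : μ = 0 := by
  obtain ⟨k, hk⟩ := eigenvalue_mem_ball hμ
  simp only [map_apply, Complex.norm_real, Real.norm_eq_abs, hQ.sum_erase_abs_eq_neg_diag,
    Metric.mem_closedBall, dist_eq_norm] at hk
  exact Complex.eq_zero_of_re_eq_zero_of_norm_sub_ofReal_le
    (Complex.re_eq_zero_of_exp_eq_one hexp) hk

theorem vecMul_eq_zero_of_vecMul_exp_eq (hQ : IsGenerator Q) {v : Fin d → ℝ}
    (hv : v ᵥ* NormedSpace.exp Q = v) : v ᵥ* Q = 0 := by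
  have hexp : NormedSpace.exp (Q.map (↑)) = (NormedSpace.exp Q).map ((↑) : ℝ → ℂ) := by
    open scoped Norms.Operator in
    exact (NormedSpace.map_exp Complex.ofRealHom.mapMatrix
      (continuous_id.matrix_map Complex.continuous_ofReal) Q).symm
  have hvC : ((↑) ∘ v : Fin d → ℂ) ᵥ* NormedSpace.exp (Q.map (↑)) = (↑) ∘ v := by
    ext j
    have := RingHom.map_vecMul Complex.ofRealHom (NormedSpace.exp Q) v j
    rw [hv] at this
    rw [hexp]
    exact this.symm
  have hQC :=
    Matrix.vecMul_eq_zero_of_vecMul_exp_eq (fun _ => hQ.eq_zero_of_hasEigenvalue_of_exp_eq_one) hvC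
  ext j
  have := RingHom.map_vecMul Complex.ofRealHom Q v j
  rw [← Complex.ofReal_inj]
  exact this.trans (congrFun hQC j)

end IsGenerator

theorem doubly_stochastic_embedding_general (d : ℕ) (M : Matrix (Fin d) (Fin d) ℝ)
    (hcol : ∀ j, ∑ i, M i j = 1) :
    (∀ Q : Matrix (Fin d) (Fin d) ℝ, IsGenerator Q →
      NormedSpace.exp Q = M → ∀ j, ∑ i, Q i j = 0) ∧
    ((∃ Q : Matrix (Fin d) (Fin d) ℝ, IsGenerator Q ∧ NormedSpace.exp Q = M) ↔
      (∃ Q : Matrix (Fin d) (Fin d) ℝ, IsGenerator Q ∧ (∀ j, ∑ i, Q i j = 0) ∧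
        NormedSpace.exp Q = M)) := by
  have hcolQ : ∀ Q : Matrix (Fin d) (Fin d) ℝ, IsGenerator Q →
      NormedSpace.exp Q = M → ∀ j, ∑ i, Q i j = 0 := by
    intro Q hQ hexp j
    have hM : (1 : Fin d → ℝ) ᵥ* NormedSpace.exp Q = 1 := by
      ext i
      simp [vecMul, dotProduct, hexp, hcol]
    simpa [vecMul, dotProduct] using
      congrFun (IsGenerator.vecMul_eq_zero_of_vecMul_exp_eq hQ hM) j
  exact ⟨hcolQ, ⟨fun ⟨Q, hQ, hexp⟩ => ⟨Q, hQ, hcolQ Q hQ hexp, hexp⟩,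
    fun ⟨Q, hQ, _, hexp⟩ => ⟨Q, hQ, hexp⟩⟩⟩

theorem doubly_stochastic_embedding (d : ℕ) (M : Matrix (Fin d) (Fin d) ℝ)
    (hM : IsMarkov M) (hcol : ∀ j, ∑ i, M i j = 1) :
    (∀ Q : Matrix (Fin d) (Fin d) ℝ, IsGenerator Q →
      NormedSpace.exp Q = M → ∀ j, ∑ i, Q i j = 0) ∧
    ((∃ Q : Matrix (Fin d) (Fin d) ℝ, IsGenerator Q ∧ NormedSpace.exp Q = M) ↔
      (∃ Q : Matrix (Fin d) (Fin d) ℝ, IsGenerator Q ∧ (∀ j, ∑ i, Q i j = 0) ∧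
        NormedSpace.exp Q = M)) :=
  doubly_stochastic_embedding_general d M hcol
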